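/- There exists a universal constant c > 0 such that for every d ≥ 1 and every A ⊆ K with ∅ ≠ A ≠ K, the cut function h' of the noise sparsifier H for G_d satisfies the small-set expansion bound h'(A) ≥ c · bal(A) · k · min(ln(1/bal(A)), √d), where bal(A) = min(|A|, k−|A|)/k and k = 2^d. -/

import Mathlib

open Finset

/-- Vertices of the `d`-dimensional Boolean hypercube. -/
abbrev Cube (d : ℕ) := Fin d → Bool

/-- Hamming distance between two Boolean strings. -/
def hamm {d : ℕ} (s t : Cube d) : ℕ := (Finset.univ.filter fun i => s i ≠ t i).card

/-- The vertex set of the graph `G_d`: `Sum.inl s` is the hypercube vertex `y_s`,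
`Sum.inr s` is the terminal `z_s`. -/
abbrev Vtx (d : ℕ) := Cube d ⊕ Cube d

/-- Edge capacities of the graph `G_d`: hypercube edges (Hamming distance `1`) have
capacity `1`, each terminal `z_s` is attached to `y_s` by an edge of capacity `√d`. -/
noncomputable def gCap (d : ℕ) : Vtx d → Vtx d → ℝ
  | Sum.inl s, Sum.inl t => if hamm s t = 1 then 1 else 0
  | Sum.inl s, Sum.inr t => if s = t then Real.sqrt d else 0
  | Sum.inr s, Sum.inl t => if s = t then Real.sqrt d else 0
  | Sum.inr _, Sum.inr _ => 0

/-- The cut function of a capacitated graph: total capacity of edges crossing `A`.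
(Each unordered crossing edge `{u,v}` with `u ∈ A`, `v ∉ A` is counted once.) -/
noncomputable def cutFun {V : Type*} [Fintype V] [DecidableEq V]
    (c : V → V → ℝ) (A : Finset V) : ℝ :=
  ∑ u ∈ A, ∑ v ∈ Aᶜ, c u v

/-- The terminal set `K = {z_s}` of `G_d`. -/
def Kset (d : ℕ) : Finset (Vtx d) := Finset.univ.image Sum.inr

/-- The terminal cut function: `h_K(U) = min { h(A) : A ∩ K = U }`. -/
noncomputable def termCut {V : Type*} [Fintype V] [DecidableEq V]
    (c : V → V → ℝ) (K U : Finset V) : ℝ :=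
  sInf {x : ℝ | ∃ A : Finset V, A ∩ K = U ∧ cutFun c A = x}

/-- The terminal cut function of `G_d`, for a set `A` of terminals (identified with
Boolean strings). -/
noncomputable def hK (d : ℕ) (A : Finset (Cube d)) : ℝ :=
  termCut (gCap d) (Kset d) (A.image Sum.inr)

/-- The flip probability `p = (1 - ρ)/2` where `ρ = 1 - 1/√d`. -/
noncomputable def noiseP (d : ℕ) : ℝ := (1 - (1 - 1 / Real.sqrt d)) / 2

/-- Capacities of the noise sparsifier `H`:
`c_H(z_s, z_t) = √d · p^{Hamm(s,t)} · (1-p)^{d - Hamm(s,t)}` for `s ≠ t`. -/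
noncomputable def noiseCap (d : ℕ) (s t : Cube d) : ℝ :=
  if s = t then 0
  else Real.sqrt d * noiseP d ^ hamm s t * (1 - noiseP d) ^ (d - hamm s t)

/-- The balance of a subset `A` of the `2^d` terminals: `min(|A|, k - |A|)/k`. -/
noncomputable def bal (d : ℕ) (A : Finset (Cube d)) : ℝ :=
  (min A.card (2 ^ d - A.card) : ℕ) / (2 ^ d : ℝ)


/-!
For `s ≠ t`, `c_H(z_s, z_t)` is `√d · 2^d` times the probability that the pair `(s, t)` is drawn
as `ρ`-correlated uniform strings, `ρ = 1 - 1/√d`. Hence, with `μ = |A|/2^d`, the cut of `A` in `H`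
is `√d · 2^d · (μ - 𝔼[1_A(x) 1_A(y)])`. Bonami's hypercontractive inequality
`𝔼[f(x) g(y)] ≤ ‖f‖_{1+ρ} ‖g‖_{1+ρ}` bounds the correlation term by `μ^{2/(1+ρ)}`; it follows by
induction on the dimension from the two-point case, which reduces to
`(1+x)^q + (1-x)^q ≥ 2 + q(q-1)x²` for `1 ≤ q ≤ 2`, `|x| ≤ 1`.
Finally `2/(1+ρ) = 1 + δ` with `δ = 1/(2√d - 1)`, and `μ - μ^{1+δ} = μ (1 - e^{-δ ln(1/μ)})` is at
least a constant times `μ · min(δ ln(1/μ), 1)`; replacing `A` by `Aᶜ` if necessary, which does not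
change the cut, makes `μ` the balance of `A`.
-/

open Real

lemma monotoneOn_Icc_of_hasDerivAt_nonneg {a b : ℝ} {f f' : ℝ → ℝ}
    (hf : ContinuousOn f (Set.Icc a b)) (hf' : ∀ x ∈ Set.Ioo a b, HasDerivAt f (f' x) x)
    (hf'₀ : ∀ x ∈ Set.Ioo a b, 0 ≤ f' x) : MonotoneOn f (Set.Icc a b) :=
  monotoneOn_of_hasDerivWithinAt_nonneg (convex_Icc a b) hf
    (by simpa only [interior_Icc] using fun x hx => (hf' x hx).hasDerivWithinAt)
    (by simpa only [interior_Icc] using hf'₀)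

lemma hasDerivAt_one_add_rpow (r y : ℝ) (hy : -1 < y) :
    HasDerivAt (fun y => (1 + y) ^ r) (r * (1 + y) ^ (r - 1)) y :=
  (((hasDerivAt_id' y).const_add 1).rpow_const (Or.inl (by linarith : 0 < 1 + y).ne')).congr_deriv
    (by ring)

lemma hasDerivAt_one_sub_rpow (r y : ℝ) (hy : y < 1) :
    HasDerivAt (fun y => (1 - y) ^ r) (-(r * (1 - y) ^ (r - 1))) y :=
  (((hasDerivAt_id' y).const_sub 1).rpow_const (Or.inl (by linarith : 0 < 1 - y).ne')).congr_deriv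
    (by ring)

lemma two_le_one_add_rpow_add_one_sub_rpow {r x : ℝ} (hr : r ≤ 0) (hx : |x| < 1) :
    2 ≤ (1 + x) ^ r + (1 - x) ^ r := by
  obtain ⟨hx₁, hx₂⟩ := abs_lt.1 hx
  have hp : 0 < (1 + x) ^ r := rpow_pos_of_pos (by linarith) r
  have hm : 0 < (1 - x) ^ r := rpow_pos_of_pos (by linarith) r
  -- AM-GM: the product is `(1 - x²) ^ r ≥ 1`
  have hprod : 1 ≤ (1 + x) ^ r * (1 - x) ^ r := by
    rw [← mul_rpow (by linarith) (by linarith)]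
    exact one_le_rpow_of_pos_of_le_one_of_nonpos (by nlinarith) (by nlinarith [sq_nonneg x]) hr
  nlinarith [sq_nonneg ((1 + x) ^ r - (1 - x) ^ r)]

lemma two_mul_mul_le_one_add_rpow_sub_one_sub_rpow {r x : ℝ} (hr₀ : 0 ≤ r) (hr₁ : r ≤ 1)
    (hx : x ∈ Set.Icc (0 : ℝ) 1) : 2 * r * x ≤ (1 + x) ^ r - (1 - x) ^ r := by
  have hmono : MonotoneOn (fun y => (1 + y) ^ r - (1 - y) ^ r - 2 * r * y) (Set.Icc 0 1) := by
    refine monotoneOn_Icc_of_hasDerivAt_nonneg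
      (f' := fun y => r * (1 + y) ^ (r - 1) + r * (1 - y) ^ (r - 1) - 2 * r) ?_ ?_ ?_
    · refine ContinuousOn.sub (ContinuousOn.sub ?_ ?_) (by fun_prop) <;>
        exact ContinuousOn.rpow_const (by fun_prop) fun _ _ => Or.inr hr₀
    · intro y hy
      have hp := hasDerivAt_one_add_rpow r y (by linarith [hy.1])
      have hm := hasDerivAt_one_sub_rpow r y hy.2
      exact ((hp.sub hm).sub ((hasDerivAt_id' y).const_mul (2 * r))).congr_deriv (by ring)
    · intro y hy
      have := two_le_one_add_rpow_add_one_sub_rpow (r := r - 1) (x := y) (by linarith)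
        (abs_lt.2 ⟨by linarith [hy.1], hy.2⟩)
      nlinarith
  have := hmono ⟨le_rfl, zero_le_one⟩ hx hx.1
  simp only [add_zero, sub_zero, one_rpow, sub_self, mul_zero] at this
  linarith

lemma two_add_mul_sq_le_one_add_rpow_add_one_sub_rpow {q x : ℝ} (hq₁ : 1 ≤ q) (hq₂ : q ≤ 2)
    (hx : |x| ≤ 1) : 2 + q * (q - 1) * x ^ 2 ≤ (1 + x) ^ q + (1 - x) ^ q := by
  -- both sides are even in `x`
  suffices key : ∀ y ∈ Set.Icc (0 : ℝ) 1, 2 + q * (q - 1) * y ^ 2 ≤ (1 + y) ^ q + (1 - y) ^ q by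
    rcases abs_cases x with ⟨hx', -⟩ | ⟨hx', -⟩
    · simpa [hx'] using key |x| ⟨abs_nonneg x, hx⟩
    · have := key |x| ⟨abs_nonneg x, hx⟩
      rw [hx', sub_neg_eq_add, ← sub_eq_add_neg, neg_sq] at this
      linarith
  have hmono : MonotoneOn (fun y => (1 + y) ^ q + (1 - y) ^ q - q * (q - 1) * y ^ 2)
      (Set.Icc 0 1) := by
    refine monotoneOn_Icc_of_hasDerivAt_nonneg
      (f' := fun y => q * ((1 + y) ^ (q - 1) - (1 - y) ^ (q - 1) - 2 * (q - 1) * y)) ?_ ?_ ?_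
    · refine ContinuousOn.sub (ContinuousOn.add ?_ ?_) (by fun_prop) <;>
        exact ContinuousOn.rpow_const (by fun_prop) fun _ _ => Or.inr (by linarith)
    · intro y hy
      have hp := hasDerivAt_one_add_rpow q y (by linarith [hy.1])
      have hm := hasDerivAt_one_sub_rpow q y hy.2
      exact ((hp.add hm).sub ((hasDerivAt_pow 2 y).const_mul (q * (q - 1)))).congr_deriv
        (by push_cast; ring)
    · intro y hy
      have := two_mul_mul_le_one_add_rpow_sub_one_sub_rpow (r := q - 1) (by linarith)
        (by linarith) ⟨hy.1.le, hy.2.le⟩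
      nlinarith
  intro y hy
  have := hmono ⟨le_rfl, zero_le_one⟩ hy hy.1
  simp only [add_zero, sub_zero, one_rpow] at this
  linarith

lemma one_add_mul_sq_le_rpow_mean {ρ x : ℝ} (hρ₀ : 0 ≤ ρ) (hρ₁ : ρ ≤ 1) (hx : |x| ≤ 1) :
    1 + ρ * x ^ 2 ≤ (((1 + x) ^ (1 + ρ) + (1 - x) ^ (1 + ρ)) / 2) ^ (2 / (1 + ρ)) := by
  have hq : 0 < 1 + ρ := by linarith
  have hy : 0 ≤ (1 + ρ) * ρ / 2 * x ^ 2 := by positivity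
  have hmean : 1 + (1 + ρ) * ρ / 2 * x ^ 2 ≤ ((1 + x) ^ (1 + ρ) + (1 - x) ^ (1 + ρ)) / 2 := by
    have := two_add_mul_sq_le_one_add_rpow_add_one_sub_rpow (q := 1 + ρ) (by linarith)
      (by linarith) hx
    rw [add_sub_cancel_left] at this
    linarith
  -- Bernoulli's inequality, since `2 / (1 + ρ) ≥ 1`
  have hbernoulli := one_add_mul_self_le_rpow_one_add (s := (1 + ρ) * ρ / 2 * x ^ 2)
    (by linarith) (p := 2 / (1 + ρ)) (by rw [le_div_iff₀ hq]; linarith)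
  calc 1 + ρ * x ^ 2 = 1 + 2 / (1 + ρ) * ((1 + ρ) * ρ / 2 * x ^ 2) := by field_simp
    _ ≤ (1 + (1 + ρ) * ρ / 2 * x ^ 2) ^ (2 / (1 + ρ)) := hbernoulli
    _ ≤ _ := rpow_le_rpow (by linarith) hmean (by positivity)

lemma mean_sq_add_mul_sq_le_rpow_mean {ρ a b : ℝ} (hρ₀ : 0 ≤ ρ) (hρ₁ : ρ ≤ 1)
    (ha : 0 ≤ a) (hb : 0 ≤ b) :
    ((a + b) / 2) ^ 2 + ρ * ((a - b) / 2) ^ 2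
      ≤ ((a ^ (1 + ρ) + b ^ (1 + ρ)) / 2) ^ (2 / (1 + ρ)) := by
  have hq : 0 < 1 + ρ := by linarith
  rcases (add_nonneg ha hb).eq_or_lt with hab | hab
  · obtain ⟨rfl, rfl⟩ : a = 0 ∧ b = 0 := ⟨by linarith, by linarith⟩
    simpa [zero_rpow hq.ne'] using rpow_nonneg le_rfl (2 / (1 + ρ))
  -- homogeneity: write `a = u (1 + x)`, `b = u (1 - x)` with `|x| ≤ 1`
  set u := (a + b) / 2
  set x := (a - b) / (a + b)
  have hu : 0 < u := by positivity
  have hx : |x| ≤ 1 := by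
    rw [abs_div, abs_of_pos hab, div_le_one hab, abs_le]
    constructor <;> linarith
  have ha' : a = u * (1 + x) := by simp only [u, x]; field_simp; ring
  have hb' : b = u * (1 - x) := by simp only [u, x]; field_simp; ring
  have hxp : 0 ≤ 1 + x := by linarith [neg_abs_le x]
  have hxm : 0 ≤ 1 - x := by linarith [le_abs_self x]
  have hmean : 0 ≤ ((1 + x) ^ (1 + ρ) + (1 - x) ^ (1 + ρ)) / 2 := by positivity
  calc ((a + b) / 2) ^ 2 + ρ * ((a - b) / 2) ^ 2 = u ^ 2 * (1 + ρ * x ^ 2) := by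
        rw [ha', hb']; ring
    _ ≤ u ^ 2 * (((1 + x) ^ (1 + ρ) + (1 - x) ^ (1 + ρ)) / 2) ^ (2 / (1 + ρ)) :=
        mul_le_mul_of_nonneg_left (one_add_mul_sq_le_rpow_mean hρ₀ hρ₁ hx) (by positivity)
    _ = ((a ^ (1 + ρ) + b ^ (1 + ρ)) / 2) ^ (2 / (1 + ρ)) := by
        rw [ha', hb', mul_rpow hu.le hxp, mul_rpow hu.le hxm, ← mul_add, mul_div_assoc,
          mul_rpow (by positivity) hmean, ← rpow_mul hu.le, mul_div_cancel₀ _ hq.ne',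
          rpow_two]

/-- The joint law of a pair of uniform bits with correlation `ρ`. -/
noncomputable def noiseWeight (ρ : ℝ) (b c : Bool) : ℝ :=
  if b = c then (1 + ρ) / 4 else (1 - ρ) / 4

lemma noiseWeight_nonneg {ρ : ℝ} (hρ₀ : 0 ≤ ρ) (hρ₁ : ρ ≤ 1) (b c : Bool) :
    0 ≤ noiseWeight ρ b c := by
  unfold noiseWeight
  split_ifs <;> linarith

noncomputable def lpMean {α : Type*} [Fintype α] (q : ℝ) (f : α → ℝ) : ℝ :=
  ((∑ a, f a ^ q) / Fintype.card α) ^ (1 / q)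

section lpMean

variable {α : Type*} [Fintype α] {q : ℝ} {f : α → ℝ}

lemma lpMean_nonneg (hf : 0 ≤ f) : 0 ≤ lpMean q f :=
  rpow_nonneg (div_nonneg (sum_nonneg fun a _ => rpow_nonneg (hf a) q) (Nat.cast_nonneg _)) _

lemma lpMean_rpow (hq : q ≠ 0) (hf : 0 ≤ f) :
    lpMean q f ^ q = (∑ a, f a ^ q) / Fintype.card α := by
  rw [lpMean, ← rpow_mul (div_nonneg (sum_nonneg fun a _ => rpow_nonneg (hf a) q)
    (Nat.cast_nonneg _)), one_div_mul_cancel hq, rpow_one]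

end lpMean

lemma sum_noiseWeight_mul_le_lpMean_mul {ρ : ℝ} (hρ₀ : 0 ≤ ρ) (hρ₁ : ρ ≤ 1) {x y : Bool → ℝ}
    (hx : 0 ≤ x) (hy : 0 ≤ y) :
    ∑ b, ∑ c, noiseWeight ρ b c * (x b * y c) ≤ lpMean (1 + ρ) x * lpMean (1 + ρ) y := by
  have hmean : ∀ z : Bool → ℝ, 0 ≤ z →
      ((z true + z false) / 2) ^ 2 + ρ * ((z true - z false) / 2) ^ 2 ≤ lpMean (1 + ρ) z ^ 2 := by
    intro z hz
    rw [← rpow_two (lpMean (1 + ρ) z), lpMean, Fintype.sum_bool, Fintype.card_bool, Nat.cast_ofNat,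
      ← rpow_mul (div_nonneg (add_nonneg (rpow_nonneg (hz _) _) (rpow_nonneg (hz _) _))
        zero_le_two)]
    convert mean_sq_add_mul_sq_le_rpow_mean hρ₀ hρ₁ (hz true) (hz false) using 2
    ring
  have hcs : (∑ b, ∑ c, noiseWeight ρ b c * (x b * y c)) ^ 2
      ≤ (lpMean (1 + ρ) x * lpMean (1 + ρ) y) ^ 2 := by
    set u₁ := (x true + x false) / 2
    set v₁ := (x true - x false) / 2
    set u₂ := (y true + y false) / 2
    set v₂ := (y true - y false) / 2
    calc (∑ b, ∑ c, noiseWeight ρ b c * (x b * y c)) ^ 2 = (u₁ * u₂ + ρ * (v₁ * v₂)) ^ 2 := by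
          simp only [Fintype.sum_bool, noiseWeight, u₁, v₁, u₂, v₂, if_true, Bool.true_eq_false,
            Bool.false_eq_true, if_false]
          ring
      _ ≤ (u₁ ^ 2 + ρ * v₁ ^ 2) * (u₂ ^ 2 + ρ * v₂ ^ 2) := by
          nlinarith [mul_nonneg hρ₀ (sq_nonneg (u₁ * v₂ - u₂ * v₁))]
      _ ≤ lpMean (1 + ρ) x ^ 2 * lpMean (1 + ρ) y ^ 2 :=
          mul_le_mul (hmean x hx) (hmean y hy) (by positivity) (sq_nonneg _)
      _ = _ := (mul_pow _ _ 2).symm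
  exact (le_abs_self _).trans
    (abs_le_of_sq_le_sq hcs (mul_nonneg (lpMean_nonneg hx) (lpMean_nonneg hy)))

noncomputable def noiseKernel (ρ : ℝ) {n : ℕ} (s t : Cube n) : ℝ :=
  ∏ i, noiseWeight ρ (s i) (t i)

section Cube

variable {n : ℕ}

lemma card_cube (n : ℕ) : Fintype.card (Cube n) = 2 ^ n := by simp

lemma sum_cube_succ {M : Type*} [AddCommMonoid M] (F : Cube (n + 1) → M) :
    ∑ s, F s = ∑ b, ∑ s : Cube n, F (Fin.cons b s) := by
  rw [← (Fin.consEquiv fun _ => Bool).sum_comp F, Fintype.sum_prod_type]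
  rfl

lemma noiseKernel_cons (ρ : ℝ) (b c : Bool) (s t : Cube n) :
    noiseKernel ρ (Fin.cons b s) (Fin.cons c t) = noiseWeight ρ b c * noiseKernel ρ s t := by
  simp [noiseKernel, Fin.prod_univ_succ]

lemma sum_noiseKernel_mul_succ (ρ : ℝ) (F : Cube (n + 1) → Cube (n + 1) → ℝ) :
    ∑ s, ∑ t, noiseKernel ρ s t * F s t = ∑ b, ∑ c, noiseWeight ρ b c *
      ∑ s, ∑ t, noiseKernel ρ s t * F (Fin.cons b s) (Fin.cons c t) := by
  simp only [sum_cube_succ, noiseKernel_cons, mul_sum, mul_assoc]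
  exact sum_congr rfl fun b _ => sum_comm

lemma lpMean_cube_succ {q : ℝ} (hq : q ≠ 0) {f : Cube (n + 1) → ℝ} (hf : 0 ≤ f) :
    lpMean q f = lpMean q fun b => lpMean q fun s : Cube n => f (Fin.cons b s) := by
  have hrow (b : Bool) : (lpMean q fun s : Cube n => f (Fin.cons b s)) ^ q
      = (∑ s : Cube n, f (Fin.cons b s) ^ q) / Fintype.card (Cube n) :=
    lpMean_rpow hq fun s => hf _
  rw [lpMean, lpMean, sum_cube_succ, Finset.sum_congr rfl fun b _ => hrow b, ← sum_div, div_div,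
    card_cube, card_cube, Fintype.card_bool, pow_succ]
  push_cast
  rfl

lemma sum_noiseKernel_right (ρ : ℝ) (s : Cube n) : ∑ t, noiseKernel ρ s t = (1 / 2) ^ n := by
  have hrow (b : Bool) : ∑ c, noiseWeight ρ b c = 1 / 2 := by
    cases b <;> simp [noiseWeight] <;> ring
  simp only [noiseKernel, ← Fintype.prod_sum fun i c => noiseWeight ρ (s i) c, hrow,
    prod_const, card_univ, Fintype.card_fin]

lemma hamm_comm (s t : Cube n) : hamm s t = hamm t s := by
  simp only [hamm, ne_comm]

lemma hamm_le (s t : Cube n) : hamm s t ≤ n :=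
  (card_filter_le _ _).trans_eq (card_fin n)

lemma noiseKernel_eq_pow (ρ : ℝ) (s t : Cube n) :
    noiseKernel ρ s t = ((1 - ρ) / 4) ^ hamm s t * ((1 + ρ) / 4) ^ (n - hamm s t) := by
  have hagree : (univ.filter fun i => s i = t i).card = n - hamm s t := by
    have := card_filter_add_card_filter_not (s := (univ : Finset (Fin n))) fun i => s i = t i
    simp only [card_fin, ← ne_eq] at this
    unfold hamm
    omega
  rw [noiseKernel, mul_comm]
  simp only [noiseWeight, prod_ite, prod_const, hagree]
  rfl

end Cube

theorem sum_noiseKernel_mul_le_lpMean_mul {ρ : ℝ} (hρ₀ : 0 ≤ ρ) (hρ₁ : ρ ≤ 1) :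
    ∀ {n : ℕ} {f g : Cube n → ℝ}, 0 ≤ f → 0 ≤ g →
      ∑ s, ∑ t, noiseKernel ρ s t * (f s * g t) ≤ lpMean (1 + ρ) f * lpMean (1 + ρ) g
  | 0, f, g, hf, hg => by
    have hq : 1 + ρ ≠ 0 := by linarith
    simp [noiseKernel, lpMean, ← rpow_mul (hf _), ← rpow_mul (hg _), hq]
  | n + 1, f, g, hf, hg => by
    set F := fun b => lpMean (1 + ρ) fun s : Cube n => f (Fin.cons b s)
    set G := fun c => lpMean (1 + ρ) fun t : Cube n => g (Fin.cons c t)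
    have hq : 1 + ρ ≠ 0 := by linarith
    calc ∑ s, ∑ t, noiseKernel ρ s t * (f s * g t)
        = ∑ b, ∑ c, noiseWeight ρ b c *
            ∑ s, ∑ t, noiseKernel ρ s t * (f (Fin.cons b s) * g (Fin.cons c t)) :=
          sum_noiseKernel_mul_succ ρ _
      _ ≤ ∑ b, ∑ c, noiseWeight ρ b c * (F b * G c) := by
          gcongr with b _ c _
          · exact noiseWeight_nonneg hρ₀ hρ₁ b c
          · exact sum_noiseKernel_mul_le_lpMean_mul hρ₀ hρ₁ (fun s => hf _) (fun t => hg _)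
      _ ≤ lpMean (1 + ρ) F * lpMean (1 + ρ) G :=
          sum_noiseWeight_mul_le_lpMean_mul hρ₀ hρ₁ (fun b => lpMean_nonneg fun s => hf _)
            (fun c => lpMean_nonneg fun t => hg _)
      _ = lpMean (1 + ρ) f * lpMean (1 + ρ) g := by
          rw [lpMean_cube_succ hq hf, lpMean_cube_succ hq hg]

lemma lpMean_indicator {α : Type*} [Fintype α] [DecidableEq α] {q : ℝ} (hq : q ≠ 0)
    (A : Finset α) :
    lpMean q (fun a => if a ∈ A then 1 else 0) = ((A.card : ℝ) / Fintype.card α) ^ (1 / q) := by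
  have hpow (a : α) : (if a ∈ A then (1 : ℝ) else 0) ^ q = if a ∈ A then 1 else 0 := by
    split_ifs <;> simp [zero_rpow hq]
  simp [lpMean, hpow]

theorem sum_sum_noiseKernel_le {ρ : ℝ} (hρ₀ : 0 ≤ ρ) (hρ₁ : ρ ≤ 1) {n : ℕ} (A : Finset (Cube n)) :
    ∑ s ∈ A, ∑ t ∈ A, noiseKernel ρ s t ≤ ((A.card : ℝ) / 2 ^ n) ^ (2 / (1 + ρ)) := by
  have hq : 1 + ρ ≠ 0 := by linarith
  set χ : Cube n → ℝ := fun s => if s ∈ A then 1 else 0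
  have hχ : 0 ≤ χ := fun s => by unfold χ; split_ifs <;> norm_num
  have h := sum_noiseKernel_mul_le_lpMean_mul hρ₀ hρ₁ hχ hχ
  rw [lpMean_indicator hq, ← rpow_add' (by positivity) (by positivity), card_cube] at h
  convert h using 1
  · simp [χ, mul_ite, sum_ite_mem]
  · rw [Nat.cast_pow, Nat.cast_ofNat, ← add_div, one_add_one_eq_two]

lemma one_div_sqrt_natCast_le_one (d : ℕ) : 1 / √(d : ℝ) ≤ 1 := by
  rcases d.eq_zero_or_pos with rfl | hd
  · simp
  · exact div_le_one_of_le₀ (one_le_sqrt.2 (by exact_mod_cast hd)) (sqrt_nonneg _)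

lemma noiseCap_comm (d : ℕ) (s t : Cube d) : noiseCap d s t = noiseCap d t s := by
  simp only [noiseCap, hamm_comm s t, @eq_comm _ s t]

lemma noiseCap_eq_noiseKernel {d : ℕ} {s t : Cube d} (hst : s ≠ t) :
    noiseCap d s t = √d * 2 ^ d * noiseKernel (1 - 1 / √d) s t := by
  have hsplit : (2 : ℝ) ^ d = 2 ^ hamm s t * 2 ^ (d - hamm s t) := by
    rw [← pow_add, Nat.add_sub_cancel' (hamm_le s t)]
  have hp : noiseP d = (1 - (1 - 1 / √d)) / 4 * 2 := by unfold noiseP; ring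
  have hq : 1 - noiseP d = (1 + (1 - 1 / √d)) / 4 * 2 := by unfold noiseP; ring
  rw [noiseCap, if_neg hst, noiseKernel_eq_pow, hsplit, hq, hp, mul_pow, mul_pow]
  ring

lemma cutFun_noiseCap_eq {d : ℕ} (A : Finset (Cube d)) :
    cutFun (noiseCap d) A = √d * 2 ^ d *
      ((A.card : ℝ) / 2 ^ d - ∑ s ∈ A, ∑ t ∈ A, noiseKernel (1 - 1 / √d) s t) := by
  set ρ := 1 - 1 / √(d : ℝ)
  have hrow (s : Cube d) :
      ∑ t ∈ Aᶜ, noiseKernel ρ s t = (1 / 2) ^ d - ∑ t ∈ A, noiseKernel ρ s t := by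
    rw [← sum_noiseKernel_right ρ s, ← sum_add_sum_compl A]
    ring
  calc cutFun (noiseCap d) A = ∑ s ∈ A, ∑ t ∈ Aᶜ, √d * 2 ^ d * noiseKernel ρ s t :=
        sum_congr rfl fun s hs => sum_congr rfl fun t ht =>
          noiseCap_eq_noiseKernel (ne_of_mem_of_not_mem hs (mem_compl.1 ht))
    _ = √d * 2 ^ d * ∑ s ∈ A, ((1 / 2) ^ d - ∑ t ∈ A, noiseKernel ρ s t) := by
        simp only [← mul_sum, hrow]
    _ = _ := by
        rw [sum_sub_distrib, sum_const, nsmul_eq_mul, one_div_pow, mul_one_div]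

lemma cutFun_noiseCap_ge {d : ℕ} (A : Finset (Cube d)) :
    √d * 2 ^ d * ((A.card : ℝ) / 2 ^ d - ((A.card : ℝ) / 2 ^ d) ^ (2 / (1 + (1 - 1 / √d))))
      ≤ cutFun (noiseCap d) A := by
  have hρ₀ : 0 ≤ 1 - 1 / √(d : ℝ) := sub_nonneg.2 (one_div_sqrt_natCast_le_one d)
  have hρ₁ : 1 - 1 / √(d : ℝ) ≤ 1 := by
    have : 0 ≤ 1 / √(d : ℝ) := by positivity
    linarith
  rw [cutFun_noiseCap_eq]
  gcongr
  exact sum_sum_noiseKernel_le hρ₀ hρ₁ A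

lemma div_one_add_le_one_sub_exp_neg {y : ℝ} (hy : 0 ≤ y) : y / (1 + y) ≤ 1 - exp (-y) := by
  have h : exp (-y) ≤ 1 / (1 + y) := by
    rw [exp_neg, ← one_div]
    exact one_div_le_one_div_of_le (by linarith) (by linarith [add_one_le_exp y])
  have : y / (1 + y) = 1 - 1 / (1 + y) := by field_simp; ring
  linarith

lemma mul_min_log_le_sub_rpow {D β : ℝ} (hD : 1 ≤ D) (hβ₀ : 0 < β) (hβ₁ : β ≤ 1) :
    1 / 4 * β * min (log (1 / β)) D ≤ D * (β - β ^ (2 / (1 + (1 - 1 / D)))) := by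
  set L := log (1 / β) with hLdef
  have hL : 0 ≤ L := log_nonneg (one_le_one_div hβ₀ hβ₁)
  set δ := 1 / (2 * D - 1) with hδdef
  have hδ : 0 < δ := one_div_pos.2 (by linarith)
  have hDδ : 1 ≤ 3 * D * δ := by
    rw [hδdef, mul_one_div, le_div_iff₀ (by linarith)]
    linarith
  have hexp : 2 / (1 + (1 - 1 / D)) = 1 + δ := by
    have : 2 * D - 1 ≠ 0 := by linarith
    have : D ≠ 0 := by linarith
    have hq : 1 + (1 - 1 / D) ≠ 0 := by
      have : 1 / D ≤ 1 := div_le_one_of_le₀ hD (by linarith)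
      linarith
    rw [div_eq_iff hq, hδdef]
    field_simp
    ring
  have hβδ : β ^ δ = exp (-(δ * L)) := by
    rw [rpow_def_of_pos hβ₀, hLdef, one_div, log_inv]
    congr 1
    ring
  have hmin : min L D * (1 + δ * L) ≤ 4 * D * (δ * L) := by
    nlinarith [min_le_left L D, min_le_right L D, mul_nonneg hδ.le hL]
  calc 1 / 4 * β * min L D ≤ D * β * (δ * L / (1 + δ * L)) := by
        rw [mul_div_assoc', le_div_iff₀ (by positivity)]
        nlinarith [mul_le_mul_of_nonneg_left hmin hβ₀.le]
    _ ≤ D * β * (1 - exp (-(δ * L))) := by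
        gcongr
        exact div_one_add_le_one_sub_exp_neg (mul_nonneg hδ.le hL)
    _ = D * (β - β ^ (2 / (1 + (1 - 1 / D)))) := by
        rw [hexp, rpow_add hβ₀, rpow_one, hβδ]
        ring

lemma cutFun_compl {V : Type*} [Fintype V] [DecidableEq V] {c : V → V → ℝ}
    (hc : ∀ u v, c u v = c v u) (A : Finset V) : cutFun c Aᶜ = cutFun c A := by
  rw [cutFun, cutFun, compl_compl, sum_comm]
  exact sum_congr rfl fun u _ => sum_congr rfl fun v _ => hc v u

section bal

variable {d : ℕ}

lemma bal_eq_or_eq_compl (A : Finset (Cube d)) :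
    bal d A = A.card / 2 ^ d ∨ bal d A = Aᶜ.card / 2 ^ d := by
  rw [card_compl, card_cube]
  rcases min_choice A.card (2 ^ d - A.card) with h | h <;> simp [bal, h]

lemma bal_pos {A : Finset (Cube d)} (hne : A ≠ ∅) (hnu : A ≠ univ) : 0 < bal d A := by
  have hlt : A.card < 2 ^ d := card_cube d ▸ (card_lt_iff_ne_univ A).2 hnu
  have hpos : 0 < A.card := card_pos.2 (nonempty_iff_ne_empty.2 hne)
  exact div_pos (Nat.cast_pos.2 (lt_min hpos (Nat.sub_pos_of_lt hlt))) (by positivity)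

lemma bal_le_one (A : Finset (Cube d)) : bal d A ≤ 1 := by
  unfold bal
  rw [div_le_one (by positivity)]
  exact_mod_cast (min_le_right _ _).trans (Nat.sub_le _ _)

end bal

/-- There is a universal constant `c > 0` such that for every `d ≥ 1`
and every proper nonempty subset `A` of terminals, the noise sparsifier satisfies the
small-set expansion bound `h'(A) ≥ c · bal(A) · k · min(ln(1/bal(A)), √d)`. -/
theorem noise_sparsifier_small_set_expansion :
    ∃ c : ℝ, 0 < c ∧ ∀ d : ℕ, 1 ≤ d → ∀ A : Finset (Cube d),
      A ≠ ∅ → A ≠ Finset.univ →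
      c * bal d A * 2 ^ d * min (Real.log (1 / bal d A)) (Real.sqrt d)
        ≤ cutFun (noiseCap d) A := by
  refine ⟨1 / 4, by norm_num, fun d hd A hne hnu => ?_⟩
  obtain ⟨B, hBcut, hBbal⟩ : ∃ B : Finset (Cube d),
      cutFun (noiseCap d) B = cutFun (noiseCap d) A ∧ bal d A = B.card / 2 ^ d := by
    rcases bal_eq_or_eq_compl A with h | h
    exacts [⟨A, rfl, h⟩, ⟨Aᶜ, cutFun_compl (noiseCap_comm d) A, h⟩]
  have hsqrt : 1 ≤ √(d : ℝ) := one_le_sqrt.2 (by exact_mod_cast hd)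
  calc 1 / 4 * bal d A * 2 ^ d * min (log (1 / bal d A)) √d
      = 2 ^ d * (1 / 4 * bal d A * min (log (1 / bal d A)) √d) := by ring
    _ ≤ 2 ^ d * (√d * (bal d A - bal d A ^ (2 / (1 + (1 - 1 / √d))))) :=
        mul_le_mul_of_nonneg_left
          (mul_min_log_le_sub_rpow hsqrt (bal_pos hne hnu) (bal_le_one A)) (by positivity)
    _ = √d * 2 ^ d * (bal d A - bal d A ^ (2 / (1 + (1 - 1 / √d)))) := by ring
    _ ≤ cutFun (noiseCap d) B := hBbal ▸ cutFun_noiseCap_ge B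
    _ = cutFun (noiseCap d) A := hBcut
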